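/- For the weight function w(i,j) = j/i, if b(n) > e·ln(n) + α and b(N) ≤ e·ln(N) + α + o(1) holds for all N (i.e., for every ε > 0, b(N) ≤ e·ln N + α + ε for all sufficiently large N), then n appears in the jumping pattern of only finitely many N; that is, n ∉ 𝒜_∞. -/

import Mathlib

/-!
Since `e · log x ≤ x` for `x > 0`, a jump `j → i` costs at least `e · (log j - log i)`, so
`b(N) - e · log N` never increases along an optimal pattern. Hence if `n` lies in the optimal
pattern of `N`, then `b(N) - e · log N ≥ b(n) - e · log n`, which exceeds `α` by a fixed margin;
the upper bound on `b` rules this out for all large `N`. Such `N` can be taken arbitrarily large: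
`n = 1` ends every pattern, and for `n ≥ 2` a start that reaches `n` after `q` jumps is at
least `n + q`.
-/

/-- Minimal cost `b(n)` of a jumping pattern from `n` down to `1`:
`b(1)=0` and `b(n) = min_{1 <= k < n} (w(k,n) + b(k))`. -/
noncomputable def minCost (w : ℕ → ℕ → ℝ) : ℕ → ℝ
  | 0 => 0
  | 1 => 0
  | (n+2) =>
    ((Finset.Icc 1 (n+1)).attach).inf'
      ⟨⟨1, by simp⟩, Finset.mem_attach _ _⟩
      (fun k => w k.1 (n+2) + minCost w k.1)
decreasing_by
  have := Finset.mem_Icc.mp k.2; omega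

/-- The lexicographically-first cost-minimizing jump sequence. -/
noncomputable def jumpSeq (w : ℕ → ℕ → ℝ) : ℕ → ℕ := fun n =>
  if n ≤ 1 then 1
  else sInf {k | 1 ≤ k ∧ k < n ∧ w k n + minCost w k = minCost w n}

lemma Real.exp_one_mul_log_le_self {x : ℝ} (hx : 0 < x) : Real.exp 1 * Real.log x ≤ x := by
  have he : 0 < Real.exp 1 := Real.exp_pos 1
  have h := Real.log_le_sub_one_of_pos (div_pos hx he)
  rw [Real.log_div hx.ne' he.ne', Real.log_exp] at h
  calc Real.exp 1 * Real.log x ≤ Real.exp 1 * (x / Real.exp 1) := by gcongr; linarith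
    _ = x := mul_div_cancel₀ x he.ne'

lemma exp_one_mul_log_sub_log_le_div {i j : ℝ} (hi : 0 < i) (hj : 0 < j) :
    Real.exp 1 * (Real.log j - Real.log i) ≤ j / i := by
  rw [← Real.log_div hj.ne' hi.ne']
  exact Real.exp_one_mul_log_le_self (div_pos hj hi)

section JumpSeq

variable (w : ℕ → ℕ → ℝ)

lemma minCost_one : minCost w 1 = 0 := by rw [minCost]

lemma exists_minCost_eq {p : ℕ} (hp : 2 ≤ p) :
    ∃ k, 1 ≤ k ∧ k < p ∧ w k p + minCost w k = minCost w p := by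
  obtain ⟨m, rfl⟩ : ∃ m, p = m + 2 := ⟨p - 2, by omega⟩
  obtain ⟨k, -, hk⟩ := Finset.exists_mem_eq_inf' (⟨⟨1, by simp⟩, Finset.mem_attach _ _⟩ :
      (Finset.Icc 1 (m+1)).attach.Nonempty) (fun k => w k.1 (m+2) + minCost w k.1)
  have hk_mem := Finset.mem_Icc.mp k.2
  exact ⟨k, hk_mem.1, by omega, by rw [minCost, hk]⟩

lemma jumpSeq_of_le_one {p : ℕ} (hp : p ≤ 1) : jumpSeq w p = 1 := by
  simp [jumpSeq, hp]

lemma jumpSeq_spec {p : ℕ} (hp : 2 ≤ p) :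
    1 ≤ jumpSeq w p ∧ jumpSeq w p < p ∧
      w (jumpSeq w p) p + minCost w (jumpSeq w p) = minCost w p := by
  rw [jumpSeq, if_neg (by omega)]
  exact Nat.sInf_mem (exists_minCost_eq w hp)

lemma iterate_jumpSeq_of_le_one {p : ℕ} (hp : p ≤ 1) (q : ℕ) : (jumpSeq w)^[q + 1] p = 1 := by
  rw [Function.iterate_succ_apply, jumpSeq_of_le_one w hp,
    Function.iterate_fixed (jumpSeq_of_le_one w le_rfl)]

lemma iterate_jumpSeq_eq_one (q : ℕ) {p : ℕ} (hp : 1 ≤ p) (hpq : p ≤ q + 1) :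
    (jumpSeq w)^[q] p = 1 := by
  induction q generalizing p with
  | zero => simp only [Function.iterate_zero, id_eq]; omega
  | succ q ih =>
    rcases Nat.lt_or_ge p 2 with hp1 | hp2
    · exact iterate_jumpSeq_of_le_one w (by omega) q
    · obtain ⟨h1, h2, -⟩ := jumpSeq_spec w hp2
      rw [Function.iterate_succ_apply]
      exact ih h1 (by omega)

lemma add_le_of_iterate_jumpSeq_eq {q p n : ℕ} (hn : 2 ≤ n) (h : (jumpSeq w)^[q] p = n) :
    n + q ≤ p := by
  induction q generalizing p with
  | zero => simp only [Function.iterate_zero, id_eq] at h; omega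
  | succ q ih =>
    rcases Nat.lt_or_ge p 2 with hp1 | hp2
    · rw [iterate_jumpSeq_of_le_one w (by omega)] at h
      omega
    · have hq := ih h
      have hjump := (jumpSeq_spec w hp2).2.1
      omega

lemma exists_ge_iterate_jumpSeq_eq {n : ℕ} (hn : 1 ≤ n)
    (h : ∀ q, ∃ p, (jumpSeq w)^[q] p = n) (M : ℕ) :
    ∃ p, M ≤ p ∧ ∃ q, (jumpSeq w)^[q] p = n := by
  rcases hn.eq_or_lt with rfl | hn2
  · exact ⟨M + 1, by omega, M, iterate_jumpSeq_eq_one w M (by omega) le_rfl⟩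
  · obtain ⟨p, hp⟩ := h M
    exact ⟨p, by have := add_le_of_iterate_jumpSeq_eq w hn2 hp; omega, M, hp⟩

variable {w}

lemma minCost_iterate_jumpSeq_add_le
    (hw : ∀ i j : ℕ, 1 ≤ i → i < j → Real.exp 1 * (Real.log j - Real.log i) ≤ w i j)
    (q p : ℕ) :
    minCost w ((jumpSeq w)^[q] p) + Real.exp 1 * (Real.log p - Real.log ((jumpSeq w)^[q] p))
      ≤ minCost w p := by
  induction q generalizing p with
  | zero => simp
  | succ q ih =>
    rcases Nat.lt_or_ge p 2 with hp1 | hp2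
    · rw [iterate_jumpSeq_of_le_one w (by omega)]
      interval_cases p <;> simp [minCost_one, minCost]
    · obtain ⟨h1, h2, hcost⟩ := jumpSeq_spec w hp2
      have hstep := hw _ _ h1 h2
      have hrest := ih (jumpSeq w p)
      rw [Function.iterate_succ_apply]
      linarith

end JumpSeq

theorem stmt_19 (w : ℕ → ℕ → ℝ) (hw : ∀ i j : ℕ, w i j = (j : ℝ) / (i : ℝ))
    (α : ℝ) (n : ℕ) (hn : 1 ≤ n)
    (hbig : Real.exp 1 * Real.log n + α < minCost w n)
    (hupper : ∀ ε : ℝ, 0 < ε → ∀ᶠ N : ℕ in Filter.atTop,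
      minCost w N ≤ Real.exp 1 * Real.log N + α + ε) :
    n ∉ {m : ℕ | ∀ q : ℕ, ∃ p : ℕ, (jumpSeq w)^[q] p = m} := by
  intro hmem
  have hw_log : ∀ i j : ℕ, 1 ≤ i → i < j →
      Real.exp 1 * (Real.log j - Real.log i) ≤ w i j := fun i j hi hij => by
    rw [hw]
    exact exp_one_mul_log_sub_log_le_div (Nat.cast_pos.mpr (by omega))
      (Nat.cast_pos.mpr (by omega))
  set δ := minCost w n - Real.exp 1 * Real.log n - α
  obtain ⟨M, hM⟩ := Filter.eventually_atTop.mp (hupper (δ / 2) (by linarith))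
  obtain ⟨p, hMp, q, hq⟩ := exists_ge_iterate_jumpSeq_eq w hn hmem M
  have hlower := minCost_iterate_jumpSeq_add_le hw_log q p
  rw [hq] at hlower
  linarith [hM p hMp]
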